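/- Let G=(V,E) be a directed graph, possibly cyclic, whose node set is partitioned as V = O ∪ L into observed and latent nodes, with distinct observed nodes X,Y ∈ O satisfying the pre-treatment assumption (De(Y)=∅ and Ch(X) ⊆ {Y}). Then there exists a subset Z ⊆ O\{X,Y} that is a backdoor adjustment set for (X,Y) if and only if there exists a subset Z ⊆ MB_σ^G(Y)\{X} that is a backdoor adjustment set for (X,Y). -/

import Mathlib

/-- A directed graph (loopless, possibly cyclic). -/
structure DiGraph (V : Type) where
  Edge : V → V → Prop
  loopless : ∀ v, ¬ Edge v v

namespace DiGraph

variable {V : Type}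

/-- Reachability by a directed path (possibly of length zero). -/
def reach (G : DiGraph V) : V → V → Prop := Relation.ReflTransGen G.Edge

/-- Ancestors of a set: nodes admitting a directed path (possibly of length zero)
to some node of the set. -/
def anc (G : DiGraph V) (S : Set V) : Set V := {Z | ∃ s ∈ S, G.reach Z s}

/-- The strongly connected component of a node. -/
def scc (G : DiGraph V) (X : V) : Set V := {Z | G.reach X Z ∧ G.reach Z X}

/-- Descendants: nodes `Z ≠ X` with a directed path from `X` to `Z`. -/
def de (G : DiGraph V) (X : V) : Set V := {Z | Z ≠ X ∧ Relation.TransGen G.Edge X Z}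

/-- Children of a node. -/
def ch (G : DiGraph V) (X : V) : Set V := {Z | G.Edge X Z}

/-- A directed graph is acyclic (a DAG) if it has no directed cycles. -/
def Acyclic (G : DiGraph V) : Prop := ∀ v, ¬ Relation.TransGen G.Edge v v

end DiGraph

/-- A path between `X` and `Y` in `G`: a sequence of `k+2` distinct nodes,
where consecutive nodes are joined by an edge of `G` in one of the two
orientations (recorded by `dir`: `dir i = true` means the edge
`node i → node (i+1)` is used, `dir i = false` means `node (i+1) → node i`). -/
structure GPath {V : Type} (G : DiGraph V) (X Y : V) where
  k : ℕ
  node : Fin (k + 2) → V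
  dir : Fin (k + 1) → Bool
  inj : Function.Injective node
  first : node 0 = X
  last : node (Fin.last (k + 1)) = Y
  adj : ∀ i : Fin (k + 1),
    (dir i = true → G.Edge (node i.castSucc) (node i.succ)) ∧
    (dir i = false → G.Edge (node i.succ) (node i.castSucc))

namespace GPath

variable {V : Type} {G : DiGraph V} {X Y : V}

/-- The `j`-th interior (non-endpoint) node of the path (position `j+1`). -/
def inner (p : GPath G X Y) (j : Fin p.k) : V := p.node j.succ.castSucc

/-- The interior node at position `j+1` is a collider: both incident edges
of the path point into it. -/
def isCollider (p : GPath G X Y) (j : Fin p.k) : Prop :=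
  p.dir j.castSucc = true ∧ p.dir j.succ = false

/-- The path is σ-blocked by `S`. -/
def sigmaBlocked (p : GPath G X Y) (S : Set V) : Prop :=
  ∃ j : Fin p.k,
    (p.isCollider j ∧ p.inner j ∉ G.anc S) ∨
    (¬ p.isCollider j ∧ p.inner j ∈ S ∧
      ((p.dir j.succ = true ∧ p.node j.succ.succ ∉ G.scc (p.inner j)) ∨
       (p.dir j.castSucc = false ∧ p.node j.castSucc.castSucc ∉ G.scc (p.inner j))))

/-- The path is d-blocked by `S`. -/
def dBlocked (p : GPath G X Y) (S : Set V) : Prop :=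
  ∃ j : Fin p.k,
    (p.isCollider j ∧ p.inner j ∉ G.anc S) ∨
    (¬ p.isCollider j ∧ p.inner j ∈ S)

end GPath

namespace DiGraph

variable {V : Type}

/-- `X` and `Y` are σ-separated given `S`: every path between them is σ-blocked. -/
def sigmaSep (G : DiGraph V) (X Y : V) (S : Set V) : Prop :=
  ∀ p : GPath G X Y, p.sigmaBlocked S

/-- `X` and `Y` are d-separated given `S`: every path between them is d-blocked. -/
def dSep (G : DiGraph V) (X Y : V) (S : Set V) : Prop :=
  ∀ p : GPath G X Y, p.dBlocked S

end DiGraph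

/-- `Ga` is a σ-acyclification of `G`. -/
def IsAcyclification {V : Type} (G Ga : DiGraph V) : Prop :=
  Ga.Acyclic ∧
  (∀ X Y : V, X ≠ Y → X ∉ G.scc Y → (Ga.Edge X Y ↔ ∃ W ∈ G.scc Y, G.Edge X W)) ∧
  (∀ X Y : V, X ≠ Y → X ∈ G.scc Y → Xor' (Ga.Edge X Y) (Ga.Edge Y X))

namespace DiGraph

variable {V : Type}

/-- `S` is the observed Markov blanket of `X` (w.r.t. σ-separation) given the
observed node set `Obs`: the minimal set `S ⊆ Obs \ {X}` such that `X` is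
σ-separated from every node of `Obs \ (S ∪ {X})` given `S`. -/
def IsSigmaMB (G : DiGraph V) (Obs : Set V) (X : V) (S : Set V) : Prop :=
  S ⊆ Obs \ {X} ∧
  (∀ W ∈ Obs \ (S ∪ {X}), G.sigmaSep X W S) ∧
  (∀ T ⊆ Obs \ {X}, (∀ W ∈ Obs \ (T ∪ {X}), G.sigmaSep X W T) → S ⊆ T)

/-- `S` is the observed Markov blanket of `X` (w.r.t. d-separation). -/
def IsDMB (G : DiGraph V) (Obs : Set V) (X : V) (S : Set V) : Prop :=
  S ⊆ Obs \ {X} ∧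
  (∀ W ∈ Obs \ (S ∪ {X}), G.dSep X W S) ∧
  (∀ T ⊆ Obs \ {X}, (∀ W ∈ Obs \ (T ∪ {X}), G.dSep X W T) → S ⊆ T)

/-- `Z` is a backdoor adjustment set for `(X, Y)`: `Z` avoids `X`, `Y` and the
descendants of `X`, and σ-blocks every backdoor path from `X` to `Y`
(a path whose first edge has an arrowhead into `X`). -/
def IsBackdoorAdjustment (G : DiGraph V) (X Y : V) (Z : Set V) : Prop :=
  X ∉ Z ∧ Y ∉ Z ∧ Z ∩ G.de X = ∅ ∧
  ∀ p : GPath G X Y, p.dir 0 = false → p.sigmaBlocked Z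

end DiGraph

def PreTreatment {V : Type} (G : DiGraph V) (X Y : V) : Prop :=
  G.de Y = ∅ ∧ G.ch X ⊆ {Y}

/-!
Given a backdoor adjustment set `Z`, the set `Z' = (MB(Y) \ {X}) ∩ An(Z ∪ {X, Y})` is one as well;
it contains no descendant of `X` because pre-treatment forces `De(X) ⊆ {Y}`.
Suppose a backdoor path `π` were σ-open given `Z'`. Then every node of `π` is an ancestor of
`Z ∪ {X, Y}`, so `π` is also σ-open given `MB(Y)`. A non-collider of `π` in `Z` from which `π`
leaves its strongly connected component therefore lies outside `MB(Y)`, and the part of `π`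
between it and `Y` would σ-connect it to `Y` given `MB(Y)`. Hence `π` is σ-open given `Z`,
except at colliders that are ancestors of `X` or `Y` but not of `Z`. Each such collider is
bypassed by leaving `π` along a directed path from it to `X` or `Y`; this creates no new
collider and keeps `π` a backdoor path, so finitely many detours give a backdoor path σ-open
given `Z`, a contradiction.
-/

namespace DiGraph

variable {V : Type} {G : DiGraph V}

lemma reach_of_edge {a b : V} (h : G.Edge a b) : G.reach a b := Relation.ReflTransGen.single h

lemma mem_anc_of_mem {S : Set V} {a : V} (h : a ∈ S) : a ∈ G.anc S := ⟨a, h, .refl⟩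

lemma anc_mono {S T : Set V} (h : S ⊆ T) : G.anc S ⊆ G.anc T := fun _ ⟨s, hs, hr⟩ => ⟨s, h hs, hr⟩

lemma mem_anc_of_reach {S : Set V} {a b : V} (hab : G.reach a b) (hb : b ∈ G.anc S) :
    a ∈ G.anc S :=
  let ⟨s, hs, hr⟩ := hb; ⟨s, hs, hab.trans hr⟩

lemma anc_subset_anc {S T : Set V} (h : S ⊆ G.anc T) : G.anc S ⊆ G.anc T :=
  fun _ ⟨_, hs, hr⟩ => mem_anc_of_reach hr (h hs)

def Arrow (G : DiGraph V) : Bool → V → V → Prop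
  | true, a, b => G.Edge a b
  | false, a, b => G.Edge b a

lemma Arrow.not {d : Bool} {a b : V} (h : G.Arrow d a b) : G.Arrow (!d) b a := by
  cases d <;> exact h

lemma arrow_iff {d : Bool} {a b : V} :
    G.Arrow d a b ↔ (d = true → G.Edge a b) ∧ (d = false → G.Edge b a) := by
  cases d <;> simp [Arrow]

/-- Three consecutive nodes of a path; `d₁` orients the edge `prev — mid` and `d₂` the edge
`mid — next`, as in `GPath.dir`. -/
@[ext]
structure Triple (V : Type) where
  prev : V
  mid : V
  next : V
  d₁ : Bool
  d₂ : Bool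

namespace Triple

def flip (t : Triple V) : Triple V := ⟨t.next, t.mid, t.prev, !t.d₂, !t.d₁⟩

def IsCollider (t : Triple V) : Prop := t.d₁ = true ∧ t.d₂ = false

def Escapes (G : DiGraph V) (t : Triple V) : Prop :=
  (t.d₂ = true ∧ t.next ∉ G.scc t.mid) ∨ (t.d₁ = false ∧ t.prev ∉ G.scc t.mid)

def SigmaBlocked (G : DiGraph V) (S : Set V) (t : Triple V) : Prop :=
  (t.IsCollider ∧ t.mid ∉ G.anc S) ∨ (¬ t.IsCollider ∧ t.mid ∈ S ∧ t.Escapes G)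

@[simp] lemma flip_flip (t : Triple V) : t.flip.flip = t := by
  simp [flip]

@[simp] lemma mid_flip (t : Triple V) : t.flip.mid = t.mid := rfl

@[simp] lemma d₂_flip (t : Triple V) : t.flip.d₂ = !t.d₁ := rfl

@[simp] lemma isCollider_flip (t : Triple V) : t.flip.IsCollider ↔ t.IsCollider := by
  simp [IsCollider, flip, and_comm]

lemma escapes_flip (t : Triple V) : t.flip.Escapes G ↔ t.Escapes G := by
  simp [Escapes, flip, or_comm]

@[simp] lemma sigmaBlocked_flip (t : Triple V) {S : Set V} :
    t.flip.SigmaBlocked G S ↔ t.SigmaBlocked G S := by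
  simp [SigmaBlocked, escapes_flip]

lemma not_isCollider_iff (t : Triple V) : ¬ t.IsCollider ↔ t.d₂ = true ∨ t.d₁ = false := by
  rcases t with ⟨_, _, _, _ | _, _ | _⟩ <;> simp [IsCollider]

end Triple

inductive Walk (G : DiGraph V) : V → V → Type
  | nil (v : V) : Walk G v v
  | cons {a b c : V} (d : Bool) (h : G.Arrow d a b) (w : Walk G b c) : Walk G a c

namespace Walk

def support : {a b : V} → Walk G a b → List V
  | _, _, nil v => [v]
  | a, _, cons _ _ w => a :: w.support

def dirs : {a b : V} → Walk G a b → List Bool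
  | _, _, nil _ => []
  | _, _, cons d _ w => d :: w.dirs

def append : {a b c : V} → Walk G a b → Walk G b c → Walk G a c
  | _, _, _, nil _, w' => w'
  | _, _, _, cons d h w, w' => cons d h (w.append w')

def reverse : {a b : V} → Walk G a b → Walk G b a
  | _, _, nil v => nil v
  | _, _, cons d h w => w.reverse.append (cons (!d) h.not (nil _))

def copy {a b a' b' : V} (w : Walk G a b) (ha : a = a') (hb : b = b') : Walk G a' b' :=
  ha ▸ hb ▸ w

def ofFn : {n : ℕ} → (f : Fin (n + 1) → V) → (ds : Fin n → Bool) →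
    (∀ i, G.Arrow (ds i) (f i.castSucc) (f i.succ)) → Walk G (f 0) (f (Fin.last n))
  | 0, f, _, _ => nil (f 0)
  | _ + 1, f, ds, h =>
    cons (ds 0) (h 0) (ofFn (fun i => f i.succ) (fun i => ds i.succ) fun i => h i.succ)

/-- The triples of `w` when `w` is entered through an edge from `p` oriented by `d`. -/
def triplesFrom : {a b : V} → V → Bool → Walk G a b → List (Triple V)
  | _, _, _, _, nil _ => []
  | a, _, p, d, @cons _ _ _ m _ d' _ w => ⟨p, a, m, d, d'⟩ :: triplesFrom a d' w

def triples : {a b : V} → Walk G a b → List (Triple V)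
  | _, _, nil _ => []
  | a, _, cons d _ w => triplesFrom a d w

variable {a b c : V} {w : Walk G a b} {t : Triple V} {S : Set V}

def SigmaOpen (S : Set V) (w : Walk G a b) : Prop := ∀ t ∈ w.triples, ¬ t.SigmaBlocked G S

def IsDirected (w : Walk G a b) : Prop := ∀ d ∈ w.dirs, d = true

@[simp] lemma support_nil : (nil a : Walk G a a).support = [a] := rfl

@[simp] lemma support_cons {d : Bool} (h : G.Arrow d a b) (w : Walk G b c) :
    (cons d h w).support = a :: w.support := rfl

@[simp] lemma dirs_nil : (nil a : Walk G a a).dirs = [] := rfl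

@[simp] lemma dirs_cons {d : Bool} (h : G.Arrow d a b) (w : Walk G b c) :
    (cons d h w).dirs = d :: w.dirs := rfl

@[simp] lemma cons_append {d : Bool} (h : G.Arrow d a b) (w : Walk G b c) {e : V}
    (w' : Walk G c e) : (cons d h w).append w' = cons d h (w.append w') := rfl

@[simp] lemma support_copy (w : Walk G a b) {a' b' : V} (ha : a = a') (hb : b = b') :
    (w.copy ha hb).support = w.support := by
  subst ha hb; rfl

@[simp] lemma dirs_copy (w : Walk G a b) {a' b' : V} (ha : a = a') (hb : b = b') :
    (w.copy ha hb).dirs = w.dirs := by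
  subst ha hb; rfl

@[simp] lemma support_ofFn {n : ℕ} (f : Fin (n + 1) → V) (ds : Fin n → Bool) h :
    (ofFn (G := G) f ds h).support = List.ofFn f := by
  induction n with
  | zero => rfl
  | succ n ih => rw [List.ofFn_succ, ← ih]; rfl

@[simp] lemma dirs_ofFn {n : ℕ} (f : Fin (n + 1) → V) (ds : Fin n → Bool) h :
    (ofFn (G := G) f ds h).dirs = List.ofFn ds := by
  induction n with
  | zero => rfl
  | succ n ih => rw [List.ofFn_succ, ← ih]; rfl

lemma exists_support_eq_cons (w : Walk G a b) : ∃ l, w.support = a :: l := by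
  cases w <;> simp

lemma support_ne_nil (w : Walk G a b) : w.support ≠ [] := by
  cases w <;> simp

lemma start_mem_support (w : Walk G a b) : a ∈ w.support := by
  cases w <;> simp

lemma support_eq_dropLast_append (w : Walk G a b) : w.support = w.support.dropLast ++ [b] := by
  induction w with
  | nil => rfl
  | cons d h w ih =>
    rw [support_cons, List.dropLast_cons_of_ne_nil w.support_ne_nil, ih]
    simp

lemma end_mem_support (w : Walk G a b) : b ∈ w.support := by
  rw [support_eq_dropLast_append]; simp

lemma getLast_support (w : Walk G a b) : w.support.getLast w.support_ne_nil = b := by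
  simp [List.getLast_congr _ _ w.support_eq_dropLast_append]

lemma length_support (w : Walk G a b) : w.support.length = w.dirs.length + 1 := by
  induction w with
  | nil => rfl
  | cons d h w ih => simp [ih]

lemma eq_of_dirs_eq_nil (h : w.dirs = []) : a = b := by
  cases w with
  | nil => rfl
  | cons => simp at h

@[simp] lemma dirs_append (w : Walk G a b) (w' : Walk G b c) :
    (w.append w').dirs = w.dirs ++ w'.dirs := by
  induction w with
  | nil => rfl
  | cons d h w ih => simp [ih]

lemma support_append (w : Walk G a b) (w' : Walk G b c) :
    (w.append w').support = w.support.dropLast ++ w'.support := by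
  induction w with
  | nil => rfl
  | cons d h w ih => simp [ih, List.dropLast_cons_of_ne_nil w.support_ne_nil]

lemma support_subset_append_left (w : Walk G a b) (w' : Walk G b c) :
    w.support ⊆ (w.append w').support := by
  intro v hv
  rw [w.support_eq_dropLast_append, List.mem_append, List.mem_singleton] at hv
  rw [support_append, List.mem_append]
  rcases hv with hv | rfl
  exacts [Or.inl hv, Or.inr w'.start_mem_support]

lemma support_subset_append_right (w : Walk G a b) (w' : Walk G b c) :
    w'.support ⊆ (w.append w').support := by
  rw [support_append]
  exact List.subset_append_right _ _

lemma nodup_support_append_iff (w : Walk G a b) (w' : Walk G b c) :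
    (w.append w').support.Nodup ↔
      w.support.Nodup ∧ w'.support.Nodup ∧ ∀ v ∈ w.support, v ∈ w'.support → v = b := by
  have hb := w'.start_mem_support
  obtain ⟨l, hl⟩ : ∃ l, w.support = l ++ [b] := ⟨_, w.support_eq_dropLast_append⟩
  rw [support_append, hl, List.dropLast_concat, List.nodup_append, List.nodup_append]
  simp only [List.nodup_cons, List.not_mem_nil, not_false_eq_true, List.nodup_nil, and_self,
    List.mem_singleton, forall_eq, ne_eq, true_and, List.mem_append]
  constructor
  · rintro ⟨hl, hw', hdisj⟩
    exact ⟨⟨hl, fun v hv => by rintro rfl; exact hdisj v hv v hb rfl⟩, hw',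
      fun v hv hv' => hv.resolve_left fun hv => hdisj v hv v hv' rfl⟩
  · rintro ⟨⟨hl, hbl⟩, hw', hdisj⟩
    refine ⟨hl, hw', fun v hv u hu huv => ?_⟩
    subst huv
    exact hbl v hv (hdisj v (Or.inl hv) hu)

@[simp] lemma support_reverse (w : Walk G a b) : w.reverse.support = w.support.reverse := by
  induction w with
  | nil => rfl
  | cons d h w ih =>
    obtain ⟨l, hl⟩ := w.exists_support_eq_cons
    simp [reverse, support_append, ih, hl]

@[simp] lemma dirs_reverse (w : Walk G a b) : w.reverse.dirs = (w.dirs.map not).reverse := by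
  induction w with
  | nil => rfl
  | cons d h w ih => simp [reverse, ih]

lemma exists_eq_append_first_mem (w : Walk G a b) {S : Set V} (h : ∃ v ∈ w.support, v ∈ S) :
    ∃ u ∈ S, ∃ (p : Walk G a u) (q : Walk G u b), w = p.append q ∧
      ∀ v ∈ p.support, v ∈ S → v = u := by
  classical
  induction w with
  | nil v =>
    obtain ⟨u, hu, huS⟩ := h
    obtain rfl := List.mem_singleton.mp hu
    exact ⟨u, huS, nil u, nil u, rfl, by simp⟩
  | @cons a m c d e w ih =>
    by_cases ha : a ∈ S
    · exact ⟨a, ha, nil a, cons d e w, rfl, by simp⟩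
    obtain ⟨u, hu, huS⟩ := h
    have hu : u ∈ w.support := (List.mem_cons.mp hu).resolve_left fun h => ha (h ▸ huS)
    obtain ⟨u, huS, p, q, rfl, hp⟩ := ih ⟨u, hu, huS⟩
    refine ⟨u, huS, cons d e p, q, rfl, ?_⟩
    rintro v (_ | ⟨_, hv⟩) hvS
    exacts [absurd hvS ha, hp v hv hvS]

lemma exists_eq_append_of_mem_support (w : Walk G a b) {u : V} (hu : u ∈ w.support) :
    ∃ (p : Walk G a u) (q : Walk G u b), w = p.append q := by
  obtain ⟨_, rfl, p, q, h, -⟩ := w.exists_eq_append_first_mem (S := {u}) ⟨u, hu, rfl⟩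
  exact ⟨p, q, h⟩

@[simp] lemma triplesFrom_nil {p : V} {d : Bool} : (nil a : Walk G a a).triplesFrom p d = [] :=
  rfl

@[simp] lemma triplesFrom_cons {p : V} {d d' : Bool} (e : G.Arrow d' a b) (w : Walk G b c) :
    (cons d' e w).triplesFrom p d = ⟨p, a, b, d, d'⟩ :: w.triplesFrom a d' := rfl

@[simp] lemma triples_nil : (nil a : Walk G a a).triples = [] := rfl

@[simp] lemma triples_cons {d : Bool} (e : G.Arrow d a b) (w : Walk G b c) :
    (cons d e w).triples = w.triplesFrom a d := rfl

lemma mem_triplesFrom_iff {p : V} {d : Bool} (w : Walk G a b) :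
    t ∈ w.triplesFrom p d ↔ ∃ j, ∃ hj : j < w.dirs.length,
      t = ⟨(p :: w.support)[j]'(by simp [length_support]; omega),
        (p :: w.support)[j + 1]'(by simp [length_support]; omega),
        (p :: w.support)[j + 2]'(by simp [length_support]; omega),
        (d :: w.dirs)[j]'(by simp; omega), (d :: w.dirs)[j + 1]'(by simp; omega)⟩ := by
  induction w generalizing p d with
  | nil => simp
  | @cons a m c d' e w ih =>
    obtain ⟨l, hl⟩ := w.exists_support_eq_cons
    simp only [triplesFrom_cons, List.mem_cons, ih, dirs_cons, List.length_cons, support_cons]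
    constructor
    · rintro (rfl | ⟨j, hj, rfl⟩)
      · exact ⟨0, by omega, by simp [hl]⟩
      · exact ⟨j + 1, by omega, rfl⟩
    · rintro ⟨_ | j, hj, rfl⟩
      · left; simp [hl]
      · exact Or.inr ⟨j, by omega, rfl⟩

lemma mem_triples_iff (w : Walk G a b) :
    t ∈ w.triples ↔ ∃ j, ∃ hj : j + 1 < w.dirs.length,
      t = ⟨w.support[j]'(by rw [length_support]; omega),
        w.support[j + 1]'(by rw [length_support]; omega),
        w.support[j + 2]'(by rw [length_support]; omega), w.dirs[j], w.dirs[j + 1]⟩ := by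
  cases w with
  | nil => simp
  | cons d e w =>
    simp only [triples_cons, mem_triplesFrom_iff, dirs_cons, List.length_cons, support_cons]
    exact exists_congr fun j => ⟨fun ⟨hj, h⟩ => ⟨by omega, h⟩, fun ⟨hj, h⟩ => ⟨by omega, h⟩⟩

lemma mem_triples_reverse (w : Walk G a b) : t ∈ w.reverse.triples ↔ t.flip ∈ w.triples := by
  have hs := w.length_support
  rw [mem_triples_iff, mem_triples_iff]
  simp only [dirs_reverse, support_reverse, List.length_reverse, List.length_map]
  constructor
  · rintro ⟨j, hj, rfl⟩
    refine ⟨w.dirs.length - 2 - j, by omega, ?_⟩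
    ext <;> simp [Triple.flip] <;> congr 1 <;> omega
  · rintro ⟨j, hj, h⟩
    refine ⟨w.dirs.length - 2 - j, by omega, ?_⟩
    rw [← t.flip_flip, h]
    ext <;> simp [Triple.flip] <;> congr 1 <;> omega

lemma sigmaOpen_reverse (h : w.SigmaOpen S) : w.reverse.SigmaOpen S := fun t ht => by
  rw [← t.sigmaBlocked_flip]
  exact h _ ((mem_triples_reverse w).mp ht)

lemma triplesFrom_append (w : Walk G a b) (w' : Walk G b c) (p : V) (d : Bool) :
    ∃ p' d', (w.append w').triplesFrom p d = w.triplesFrom p d ++ w'.triplesFrom p' d' := by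
  induction w generalizing p d with
  | nil => exact ⟨p, d, rfl⟩
  | @cons a _ _ d' e w ih =>
    obtain ⟨p', d'', h⟩ := ih w' a d'
    exact ⟨p', d'', by simp [h]⟩

lemma triples_subset_triplesFrom (w : Walk G a b) (p : V) (d : Bool) :
    w.triples ⊆ w.triplesFrom p d := by
  cases w with
  | nil => simp
  | cons => exact List.subset_cons_self _ _

lemma triples_subset_append_left (w : Walk G a b) (w' : Walk G b c) :
    w.triples ⊆ (w.append w').triples := by
  cases w with
  | nil => simp
  | cons d e w =>
    obtain ⟨p', d', h⟩ := triplesFrom_append w w' _ d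
    rw [cons_append, triples_cons, triples_cons, h]
    exact List.subset_append_left _ _

lemma triples_subset_append_right (w : Walk G a b) (w' : Walk G b c) :
    w'.triples ⊆ (w.append w').triples := by
  cases w with
  | nil => exact fun _ h => h
  | cons d e w =>
    obtain ⟨p', d', h⟩ := triplesFrom_append w w' _ d
    rw [cons_append, triples_cons, h]
    exact fun t ht => List.mem_append_right _ (triples_subset_triplesFrom w' p' d' ht)

lemma mid_mem_dropLast_of_mem_triplesFrom {p : V} {d : Bool} (ht : t ∈ w.triplesFrom p d) :
    t.mid ∈ w.support.dropLast ∧ t.d₂ ∈ w.dirs := by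
  induction w generalizing p d with
  | nil => simp at ht
  | cons d' e w ih =>
    rw [support_cons, List.dropLast_cons_of_ne_nil w.support_ne_nil]
    rcases List.mem_cons.mp ht with rfl | ht
    · simp
    · exact (ih ht).imp (List.mem_cons_of_mem _) (List.mem_cons_of_mem _)

lemma mid_mem_support (ht : t ∈ w.triples) : t.mid ∈ w.support := by
  cases w with
  | nil => simp at ht
  | cons d e w =>
    exact List.mem_cons_of_mem _
      (List.dropLast_subset _ (mid_mem_dropLast_of_mem_triplesFrom ht).1)

lemma d₂_mem_dirs (ht : t ∈ w.triples) : t.d₂ ∈ w.dirs := by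
  cases w with
  | nil => simp at ht
  | cons d e w => exact List.mem_cons_of_mem _ (mid_mem_dropLast_of_mem_triplesFrom ht).2

lemma mid_ne_start (hN : w.support.Nodup) (ht : t ∈ w.triples) : t.mid ≠ a := by
  cases w with
  | nil => simp at ht
  | cons d e w =>
    rintro rfl
    exact (List.nodup_cons.mp hN).1
      (List.dropLast_subset _ (mid_mem_dropLast_of_mem_triplesFrom ht).1)

lemma mid_ne_end (hN : w.support.Nodup) (ht : t ∈ w.triples) : t.mid ≠ b := by
  cases w with
  | nil => simp at ht
  | cons d e w =>
    rintro rfl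
    have hN := (List.nodup_cons.mp hN).2
    rw [w.support_eq_dropLast_append, List.nodup_append] at hN
    exact hN.2.2 _ (mid_mem_dropLast_of_mem_triplesFrom ht).1 _ (List.mem_singleton_self _) rfl

lemma mem_triples_append {w' : Walk G b c} (ht : t ∈ (w.append w').triples) :
    t ∈ w.triples ∨ (t.mid ∈ w'.support ∧ t.d₂ ∈ w'.dirs) := by
  cases w with
  | nil => exact Or.inr ⟨mid_mem_support ht, d₂_mem_dirs ht⟩
  | cons d e w =>
    obtain ⟨p', d', h⟩ := triplesFrom_append w w' _ d
    rw [cons_append, triples_cons, h, List.mem_append] at ht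
    exact ht.imp id fun ht =>
      (mid_mem_dropLast_of_mem_triplesFrom ht).imp (fun h => List.dropLast_subset _ h) id

lemma arrow_getElem (w : Walk G a b) (j : ℕ) (hj : j < w.dirs.length) :
    G.Arrow w.dirs[j] (w.support[j]'(by rw [length_support]; omega))
      (w.support[j + 1]'(by rw [length_support]; omega)) := by
  induction w generalizing j with
  | nil => simp at hj
  | cons d e w ih =>
    cases j with
    | zero =>
      obtain ⟨l, hl⟩ := w.exists_support_eq_cons
      simpa [hl] using e
    | succ j => simpa using ih j (by simpa using hj)

def toGPath (w : Walk G a b) (hN : w.support.Nodup) (hne : w.dirs ≠ []) : GPath G a b where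
  k := w.dirs.length - 1
  node i := w.support[i.val]'(by
    have := w.length_support; have := List.length_pos_of_ne_nil hne; omega)
  dir i := w.dirs[i.val]'(by have := List.length_pos_of_ne_nil hne; omega)
  inj i j h := Fin.ext (hN.getElem_inj_iff.mp h)
  first := by
    obtain ⟨l, hl⟩ := w.exists_support_eq_cons
    simp [hl]
  last := by
    have h := w.getLast_support
    rw [List.getLast_eq_getElem] at h
    have := w.length_support; have := List.length_pos_of_ne_nil hne
    convert h using 2
    simp only [Fin.val_last]
    omega
  adj i := arrow_iff.mp (w.arrow_getElem i _)

lemma ofFn_node_toGPath {hN : w.support.Nodup} {hne : w.dirs ≠ []} :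
    List.ofFn (w.toGPath hN hne).node = w.support := by
  have := w.length_support; have := List.length_pos_of_ne_nil hne
  refine List.ext_getElem (by simp [toGPath]; omega) fun j _ _ => ?_
  rw [List.getElem_ofFn]
  rfl

lemma ofFn_dir_toGPath {hN : w.support.Nodup} {hne : w.dirs ≠ []} :
    List.ofFn (w.toGPath hN hne).dir = w.dirs := by
  have := List.length_pos_of_ne_nil hne
  refine List.ext_getElem (by simp [toGPath]; omega) fun j _ _ => ?_
  rw [List.getElem_ofFn]
  rfl

end Walk

end DiGraph

namespace GPath

open DiGraph

variable {V : Type} {G : DiGraph V} {X Y : V} {S : Set V}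

def triple (p : GPath G X Y) (j : Fin p.k) : Triple V :=
  ⟨p.node j.castSucc.castSucc, p.inner j, p.node j.succ.succ, p.dir j.castSucc, p.dir j.succ⟩

lemma sigmaBlocked_iff_exists_triple {p : GPath G X Y} :
    p.sigmaBlocked S ↔ ∃ j, (p.triple j).SigmaBlocked G S :=
  Iff.rfl

lemma sigmaBlocked_iff_not_sigmaOpen {p : GPath G X Y} {a b : V} {w : G.Walk a b}
    (hs : w.support = List.ofFn p.node) (hd : w.dirs = List.ofFn p.dir) :
    p.sigmaBlocked S ↔ ¬ w.SigmaOpen S := by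
  have hk : w.dirs.length = p.k + 1 := by simp [hd]
  have htriple : ∀ j (hj : j + 1 < w.dirs.length),
      (⟨w.support[j]'(by rw [Walk.length_support]; omega),
        w.support[j + 1]'(by rw [Walk.length_support]; omega),
        w.support[j + 2]'(by rw [Walk.length_support]; omega), w.dirs[j], w.dirs[j + 1]⟩ :
        Triple V) = p.triple ⟨j, by omega⟩ := by
    intro j hj
    ext <;> simp only [hs, hd, List.getElem_ofFn, triple, inner] <;> rfl
  rw [sigmaBlocked_iff_exists_triple]
  simp only [Walk.SigmaOpen, Walk.mem_triples_iff, not_forall, not_not, exists_prop]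
  constructor
  · rintro ⟨j, hj⟩
    exact ⟨p.triple j, ⟨j, by omega, (htriple j (by omega)).symm⟩, hj⟩
  · rintro ⟨_, ⟨j, hj, rfl⟩, hb⟩
    exact ⟨⟨j, by omega⟩, htriple j hj ▸ hb⟩

def toWalk (p : GPath G X Y) : G.Walk X Y :=
  (Walk.ofFn p.node p.dir fun i => arrow_iff.mpr (p.adj i)).copy p.first p.last

@[simp] lemma support_toWalk (p : GPath G X Y) : p.toWalk.support = List.ofFn p.node := by
  simp [toWalk]

@[simp] lemma dirs_toWalk (p : GPath G X Y) : p.toWalk.dirs = List.ofFn p.dir := by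
  simp [toWalk]

lemma sigmaBlocked_iff_not_sigmaOpen_toWalk {p : GPath G X Y} :
    p.sigmaBlocked S ↔ ¬ p.toWalk.SigmaOpen S :=
  sigmaBlocked_iff_not_sigmaOpen p.support_toWalk p.dirs_toWalk

end GPath

namespace DiGraph.Walk

variable {V : Type} {G : DiGraph V} {a b : V} {w : G.Walk a b} {t : Triple V} {S Z : Set V}

lemma sigmaBlocked_toGPath_iff {hN : w.support.Nodup} {hne : w.dirs ≠ []} :
    (w.toGPath hN hne).sigmaBlocked S ↔ ¬ w.SigmaOpen S :=
  GPath.sigmaBlocked_iff_not_sigmaOpen ofFn_node_toGPath.symm ofFn_dir_toGPath.symm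

lemma not_sigmaOpen_of_sigmaSep (h : G.sigmaSep a b S) (hN : w.support.Nodup) (hab : a ≠ b) :
    ¬ w.SigmaOpen S :=
  sigmaBlocked_toGPath_iff.mp (h (w.toGPath hN fun h => hab (eq_of_dirs_eq_nil h)))

lemma not_sigmaOpen_of_forall_sigmaBlocked
    (h : ∀ p : GPath G a b, p.dir 0 = false → p.sigmaBlocked S) (hN : w.support.Nodup)
    (hfirst : w.dirs.head? = some false) : ¬ w.SigmaOpen S := by
  have hne : w.dirs ≠ [] := by rintro h; simp [h] at hfirst
  refine sigmaBlocked_toGPath_iff.mp (h (w.toGPath hN hne) ?_)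
  obtain ⟨d, ds, hds⟩ := List.exists_cons_of_ne_nil hne
  simpa [toGPath, hds] using hfirst

/-- Following `w` from a node with an outgoing edge, one reaches a collider or the last node. -/
lemma mem_anc_of_triplesFrom {A : Set V} (w : G.Walk a b) (p : V) (d : Bool)
    (hA : ∀ t ∈ w.triplesFrom p d, t.IsCollider → t.mid ∈ A) :
    (d = true → a ∈ G.anc (A ∪ {b})) ∧
      ∀ t ∈ w.triplesFrom p d, t.d₂ = true → t.mid ∈ G.anc (A ∪ {b}) := by
  induction w generalizing p d with
  | nil => exact ⟨fun _ => mem_anc_of_mem (Or.inr rfl), by simp⟩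
  | @cons a m c d' e w ih =>
    simp only [triplesFrom_cons, List.mem_cons, forall_eq_or_imp] at hA ⊢
    have ih := ih a d' hA.2
    have ha : d' = true → a ∈ G.anc (A ∪ {c}) := by
      rintro rfl
      exact mem_anc_of_reach (reach_of_edge e) (ih.1 rfl)
    refine ⟨fun hd => ?_, ha, ih.2⟩
    cases d'
    · exact mem_anc_of_mem (Or.inl (hA.1 ⟨hd, rfl⟩))
    · exact ha rfl

lemma mid_mem_anc_of_d₂_eq_true {A : Set V} (hA : ∀ t ∈ w.triples, t.IsCollider → t.mid ∈ A)
    (ht : t ∈ w.triples) (hd : t.d₂ = true) : t.mid ∈ G.anc (A ∪ {b}) := by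
  cases w with
  | nil => simp at ht
  | cons d e w => exact (mem_anc_of_triplesFrom w a d hA).2 t ht hd

lemma mid_mem_anc {A : Set V} (hA : ∀ t ∈ w.triples, t.IsCollider → t.mid ∈ A)
    (ht : t ∈ w.triples) : t.mid ∈ G.anc (A ∪ {a, b}) := by
  by_cases hcoll : t.IsCollider
  · exact mem_anc_of_mem (Or.inl (hA t ht hcoll))
  rcases t.not_isCollider_iff.mp hcoll with hd | hd
  · exact anc_mono (Set.union_subset_union_right A (Set.subset_insert a {b}))
      (mid_mem_anc_of_d₂_eq_true hA ht hd)
  · have hA' : ∀ t ∈ w.reverse.triples, t.IsCollider → t.mid ∈ A := fun t ht hcoll => by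
      simpa using hA _ ((mem_triples_reverse w).mp ht) (t.isCollider_flip.mpr hcoll)
    refine anc_mono (Set.union_subset_union_right A ?_)
      (mid_mem_anc_of_d₂_eq_true hA' (t := t.flip) (by simpa [mem_triples_reverse] using ht)
        (by simp [hd]))
    simp

lemma exists_isDirected_of_reach (h : G.reach a b) :
    ∃ q : G.Walk a b, q.support.Nodup ∧ q.IsDirected ∧ ∀ v ∈ q.support, G.reach a v := by
  classical
  induction h using Relation.ReflTransGen.head_induction_on with
  | refl => exact ⟨nil b, by simp, by simp [IsDirected], by simpa using .refl⟩
  | @head a m e _ ih =>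
    obtain ⟨q, hN, hD, hR⟩ := ih
    by_cases ha : a ∈ q.support
    · obtain ⟨q₁, q₂, rfl⟩ := q.exists_eq_append_of_mem_support ha
      refine ⟨q₂, ((nodup_support_append_iff _ _).mp hN).2.1,
        fun d hd => hD d (by simp [hd]), fun v hv => ?_⟩
      exact (reach_of_edge e).trans (hR v (support_subset_append_right _ _ hv))
    · refine ⟨cons true e q, List.nodup_cons.mpr ⟨ha, hN⟩, ?_, ?_⟩
      · rintro d (_ | ⟨_, hd⟩)
        exacts [rfl, hD d hd]
      · rintro v (_ | ⟨_, hv⟩)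
        exacts [.refl, (reach_of_edge e).trans (hR v hv)]

/-- Follow `w` up to its first node `u` on a directed path `q` from `c` to `b`, then follow `q`;
the new triples are non-colliders on `q` (or the junction at `u`, whose outgoing edge is on `q`). -/
lemma exists_reroute (hN : w.support.Nodup) {c : V} (hc : c ∈ w.support) (hcb : c ≠ b)
    (hreach : G.reach c b) :
    ∃ w' : G.Walk a b, w'.support.Nodup ∧ w'.dirs.getLast? = some true ∧
      (¬ G.reach c a → w'.dirs.head? = w.dirs.head?) ∧
      ∀ t ∈ w'.triples, (t ∈ w.triples ∧ t.mid ≠ c) ∨ (¬ t.IsCollider ∧ G.reach c t.mid) := by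
  obtain ⟨p, r, rfl⟩ := w.exists_eq_append_of_mem_support hc
  obtain ⟨hpN, -, hpr⟩ := (nodup_support_append_iff _ _).mp hN
  obtain ⟨q, hqN, hqD, hqR⟩ := exists_isDirected_of_reach hreach
  obtain ⟨u, huq, p₁, p₂, rfl, hp₁⟩ := p.exists_eq_append_first_mem
    (S := {v | v ∈ q.support}) ⟨c, p.end_mem_support, q.start_mem_support⟩
  obtain ⟨q₁, q₂, rfl⟩ := q.exists_eq_append_of_mem_support huq
  have hu : u ∈ (p₁.append p₂).support := support_subset_append_left _ _ p₁.end_mem_support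
  have hq₂ : ∀ d ∈ q₂.dirs, d = true := fun d hd => hqD d (by simp [hd])
  refine ⟨p₁.append q₂, ?_, ?_, fun hca => ?_, fun t ht => ?_⟩
  · refine (nodup_support_append_iff _ _).mpr ⟨((nodup_support_append_iff _ _).mp hpN).1,
      ((nodup_support_append_iff _ _).mp hqN).2.1, fun v hv hv' => hp₁ v hv ?_⟩
    exact support_subset_append_right _ _ hv'
  · have hub : u ≠ b := by
      rintro rfl
      exact hcb (hpr u hu r.end_mem_support).symm
    have hne : q₂.dirs ≠ [] := fun h => hub (eq_of_dirs_eq_nil h)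
    rw [dirs_append, List.getLast?_append_of_ne_nil _ hne, List.getLast?_eq_some_getLast hne,
      hq₂ _ (List.getLast_mem hne)]
  · have hne : p₁.dirs ≠ [] := fun h =>
      hca (eq_of_dirs_eq_nil h ▸ hqR u (support_subset_append_right _ _ q₂.start_mem_support))
    simp [List.head?_append_of_ne_nil _ hne]
  · rcases mem_triples_append ht with ht | ⟨hmid, hd⟩
    · have ht' := triples_subset_append_left _ p₂ ht
      exact Or.inl ⟨triples_subset_append_left _ r ht', mid_ne_end hpN ht'⟩
    · refine Or.inr ⟨fun hcoll => ?_, hqR _ (support_subset_append_right _ _ hmid)⟩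
      simp [Triple.IsCollider, hq₂ _ hd] at hcoll

def AncestrallyOpen (Z : Set V) (w : G.Walk a b) : Prop :=
  ∀ t ∈ w.triples, (t.IsCollider → t.mid ∈ G.anc (Z ∪ {a, b})) ∧
    (¬ t.IsCollider → t.Escapes G → t.mid ∉ Z)

def blockingColliders (Z : Set V) (w : G.Walk a b) : Set V :=
  {v | ∃ t ∈ w.triples, t.IsCollider ∧ t.mid ∉ G.anc Z ∧ t.mid = v}

lemma blockingColliders_finite (w : G.Walk a b) : (w.blockingColliders Z).Finite :=
  (List.finite_toSet w.support).subset fun _ ⟨_, ht, _, _, hv⟩ => hv ▸ mid_mem_support ht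

lemma sigmaOpen_of_blockingColliders_eq_empty (hw : w.AncestrallyOpen Z)
    (hB : w.blockingColliders Z = ∅) : w.SigmaOpen Z := by
  rintro t ht (⟨hcoll, hZ⟩ | ⟨hcoll, hZ, hesc⟩)
  · exact hB.subset ⟨t, ht, hcoll, hZ, rfl⟩
  · exact (hw t ht).2 hcoll hesc hZ

lemma ancestrallyOpen_of_triples (hw : w.AncestrallyOpen Z) {c : V} (hc : c ∉ G.anc Z)
    {w' : G.Walk a b}
    (h : ∀ t ∈ w'.triples, (t ∈ w.triples ∧ t.mid ≠ c) ∨ (¬ t.IsCollider ∧ G.reach c t.mid)) :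
    w'.AncestrallyOpen Z ∧ w'.blockingColliders Z ⊆ w.blockingColliders Z \ {c} := by
  refine ⟨fun t ht => ?_, ?_⟩
  · rcases h t ht with ⟨ht, -⟩ | ⟨hcoll, hreach⟩
    · exact hw t ht
    · exact ⟨fun h => absurd h hcoll,
        fun _ _ hZ => hc (mem_anc_of_reach hreach (mem_anc_of_mem hZ))⟩
  · rintro _ ⟨t, ht, hcoll, htZ, rfl⟩
    rcases h t ht with ⟨ht, hne⟩ | ⟨hcoll', -⟩
    · exact ⟨⟨t, ht, hcoll, htZ, rfl⟩, hne⟩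
    · exact absurd hcoll hcoll'

lemma exists_blockingColliders_subset (hN : w.support.Nodup) (hfirst : w.dirs.head? = some false)
    (hw : w.AncestrallyOpen Z) {c : V} (hc : c ∈ w.blockingColliders Z) :
    ∃ w' : G.Walk a b, w'.support.Nodup ∧ w'.dirs.head? = some false ∧ w'.AncestrallyOpen Z ∧
      w'.blockingColliders Z ⊆ w.blockingColliders Z \ {c} := by
  obtain ⟨t, ht, hcoll, hcZ, rfl⟩ := hc
  by_cases hca : G.reach t.mid a
  · obtain ⟨w', hN', hlast, -, h⟩ := exists_reroute (w := w.reverse) (by simpa using hN)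
      (by simpa using mid_mem_support ht) (mid_ne_start hN ht) hca
    refine ⟨w'.reverse, by simpa using hN', by simp [List.getLast?_map, hlast],
      ancestrallyOpen_of_triples hw hcZ fun s hs => ?_⟩
    rw [mem_triples_reverse] at hs
    simpa [mem_triples_reverse] using h _ hs
  · obtain ⟨s, hs, hreach⟩ := (hw t ht).1 hcoll
    have hcb : G.reach t.mid b := by
      rcases hs with hs | rfl | rfl
      exacts [absurd (mem_anc_of_reach hreach (mem_anc_of_mem hs)) hcZ, absurd hreach hca, hreach]
    obtain ⟨w', hN', -, hfirst', h⟩ :=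
      exists_reroute hN (mid_mem_support ht) (mid_ne_end hN ht) hcb
    exact ⟨w', hN', (hfirst' hca).trans hfirst, ancestrallyOpen_of_triples hw hcZ h⟩

theorem exists_sigmaOpen_of_ancestrallyOpen (hN : w.support.Nodup)
    (hfirst : w.dirs.head? = some false) (hw : w.AncestrallyOpen Z) :
    ∃ w' : G.Walk a b, w'.support.Nodup ∧ w'.dirs.head? = some false ∧ w'.SigmaOpen Z := by
  induction hn : (w.blockingColliders Z).ncard using Nat.strong_induction_on generalizing w with
  | _ n ih =>
  rcases (w.blockingColliders Z).eq_empty_or_nonempty with hB | ⟨c, hc⟩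
  · exact ⟨w, hN, hfirst, sigmaOpen_of_blockingColliders_eq_empty hw hB⟩
  obtain ⟨w', hN', hfirst', hw', hsub⟩ := exists_blockingColliders_subset hN hfirst hw hc
  have hlt : (w'.blockingColliders Z).ncard < n := hn ▸ Set.ncard_lt_ncard
    (hsub.trans_ssubset (Set.sdiff_singleton_ssubset.mpr hc)) w.blockingColliders_finite
  exact ih _ hlt hN' hfirst' hw' rfl

end DiGraph.Walk
namespace DiGraph

variable {V : Type} {G : DiGraph V} {Obs M Z : Set V} {X Y : V}

lemma de_subset_of_preTreatment (h : PreTreatment G X Y) : G.de X ⊆ {Y} := by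
  rintro v ⟨hvX, hXv⟩
  obtain ⟨m, hXm, hmv⟩ := Relation.TransGen.head'_iff.mp hXv
  obtain rfl : m = Y := h.2 hXm
  rcases Relation.reflTransGen_iff_eq_or_transGen.mp hmv with rfl | hmv
  · rfl
  · by_contra hvm
    exact Set.eq_empty_iff_forall_notMem.mp h.1 v ⟨hvm, hmv⟩

/-- Every node of `w` is an ancestor of `Z ∪ {X, Y}`, so `w` is σ-open given `M` as well; a node
of `Z` at which `w` leaves its strongly connected component therefore lies outside `M`, and the
part of `w` after it would σ-connect it to `Y`. -/
lemma Walk.ancestrallyOpen_of_sigmaOpen {w : G.Walk X Y} (hN : w.support.Nodup)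
    (hZ : Z ⊆ Obs) (hsep : ∀ W ∈ Obs \ (M ∪ {Y}), G.sigmaSep Y W M)
    (hw : w.SigmaOpen ((M \ {X}) ∩ G.anc (Z ∪ {X, Y}))) : w.AncestrallyOpen Z := by
  set S := (M \ {X}) ∩ G.anc (Z ∪ {X, Y})
  have hcoll : ∀ t ∈ w.triples, t.IsCollider → t.mid ∈ G.anc S := fun t ht hc => by
    by_contra h
    exact hw t ht (Or.inl ⟨hc, h⟩)
  have hanc : ∀ t ∈ w.triples, t.mid ∈ G.anc (Z ∪ {X, Y}) := by
    refine fun t ht => anc_subset_anc (Set.union_subset (anc_subset_anc Set.inter_subset_right)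
      fun v hv => mem_anc_of_mem (Or.inr hv)) (Walk.mid_mem_anc hcoll ht)
  have hM : w.SigmaOpen M := by
    rintro t ht (⟨hc, hnot⟩ | ⟨hc, hM, hesc⟩)
    · exact hnot (anc_mono (fun v hv => hv.1.1) (hcoll t ht hc))
    · exact hw t ht (Or.inr ⟨hc, ⟨⟨hM, Walk.mid_ne_start hN ht⟩, hanc t ht⟩, hesc⟩)
  refine fun t ht => ⟨fun _ => hanc t ht, fun hc hesc hZt => ?_⟩
  have hMt : t.mid ∉ M := fun hMt => hM t ht (Or.inr ⟨hc, hMt, hesc⟩)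
  have hY : t.mid ≠ Y := Walk.mid_ne_end hN ht
  obtain ⟨p, q, rfl⟩ := w.exists_eq_append_of_mem_support (Walk.mid_mem_support ht)
  refine Walk.not_sigmaOpen_of_sigmaSep (hsep t.mid ⟨hZ hZt, by simp [hMt, hY]⟩)
    (w := q.reverse) ?_ hY.symm (Walk.sigmaOpen_reverse fun s hs => ?_)
  · simpa using ((Walk.nodup_support_append_iff _ _).mp hN).2.1
  · exact hM s (Walk.triples_subset_append_right p q hs)

theorem isBackdoorAdjustment_inter_anc (hpre : PreTreatment G X Y) (hZ : Z ⊆ Obs)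
    (hadj : G.IsBackdoorAdjustment X Y Z) (hM : M ⊆ Obs \ {Y})
    (hsep : ∀ W ∈ Obs \ (M ∪ {Y}), G.sigmaSep Y W M) :
    G.IsBackdoorAdjustment X Y ((M \ {X}) ∩ G.anc (Z ∪ {X, Y})) := by
  refine ⟨fun h => h.1.2 rfl, fun h => (hM h.1.1).2 rfl, ?_, fun p hp => ?_⟩
  · refine Set.eq_empty_of_forall_notMem fun v ⟨hv, hde⟩ => ?_
    obtain rfl := de_subset_of_preTreatment hpre hde
    exact (hM hv.1.1).2 rfl
  rw [GPath.sigmaBlocked_iff_not_sigmaOpen_toWalk]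
  intro hopen
  have hN : p.toWalk.support.Nodup := by simpa using List.nodup_ofFn.mpr p.inj
  have hfirst : p.toWalk.dirs.head? = some false := by simp [List.ofFn_succ, hp]
  obtain ⟨w, hN', hfirst', hopen'⟩ := Walk.exists_sigmaOpen_of_ancestrallyOpen hN hfirst
    (Walk.ancestrallyOpen_of_sigmaOpen hN hZ hsep hopen)
  exact Walk.not_sigmaOpen_of_forall_sigmaBlocked hadj.2.2.2 hN' hfirst' hopen'

end DiGraph

theorem exists_backdoor_iff_exists_in_MB_general {V : Type}
    (G : DiGraph V) (Obs : Set V)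
    (X Y : V)
    (hpre : PreTreatment G X Y)
    (MBY : Set V) (hMBY : G.IsSigmaMB Obs Y MBY) :
    (∃ Z ⊆ Obs \ {X, Y}, G.IsBackdoorAdjustment X Y Z) ↔
    (∃ Z ⊆ MBY \ {X}, G.IsBackdoorAdjustment X Y Z) := by
  obtain ⟨hM, hsep, -⟩ := hMBY
  constructor
  · rintro ⟨Z, hZ, hadj⟩
    exact ⟨_, Set.inter_subset_left, DiGraph.isBackdoorAdjustment_inter_anc hpre
      (hZ.trans Set.sdiff_subset) hadj hM hsep⟩
  · rintro ⟨Z, hZ, hadj⟩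
    refine ⟨Z, fun v hv => ⟨(hM (hZ hv).1).1, ?_⟩, hadj⟩
    rintro (rfl | rfl)
    exacts [(hZ hv).2 rfl, (hM (hZ hv).1).2 rfl]

/-- Pre-treatment assumption: the outcome `Y` has no descendants and the
treatment `X` has no children except possibly `Y`. -/
theorem exists_backdoor_iff_exists_in_MB {V : Type} [Fintype V]
    (G : DiGraph V) (Obs Lat : Set V)
    (hpart : Obs ∪ Lat = Set.univ) (hdisj : Obs ∩ Lat = ∅)
    (X Y : V) (hX : X ∈ Obs) (hY : Y ∈ Obs) (hXY : X ≠ Y)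
    (hpre : PreTreatment G X Y)
    (MBY : Set V) (hMBY : G.IsSigmaMB Obs Y MBY) :
    (∃ Z ⊆ Obs \ {X, Y}, G.IsBackdoorAdjustment X Y Z) ↔
    (∃ Z ⊆ MBY \ {X}, G.IsBackdoorAdjustment X Y Z) :=
  exists_backdoor_iff_exists_in_MB_general G Obs X Y hpre MBY hMBY
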